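/- arXiv:1907.12589 — 2 statements merged into one kernel-verified Lean document; each statement's English description precedes it below -/
import Mathlib

section
/- Let Z be a real random variable with the standard normal distribution N(0,1). Then for all b, z ∈ ℝ, P(|Z + b/2| > |z + b/2|) = 1 − |Φ(z + b) − Φ(−z)|. In particular, the FAB p-value function corresponding to observed value z and parameter b equals p(z,b) = 1 − |Φ(z + b) − Φ(−z)|. -/
open MeasureTheory ProbabilityTheory

/-- Φ, the standard normal cumulative distribution function. -/
noncomputable def Phi : ℝ → ℝ := fun x => ProbabilityTheory.cdf (gaussianReal 0 1) x

/-!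
Writing `c = b / 2` and `t = z + c`, the event is `Z ∉ [-c - |t|, -c + |t|]`, whose probability is
`1 - (Φ(|t| - c) - Φ(-|t| - c))`. The symmetry `Φ(-x) = 1 - Φ(x)` turns the difference of the
two Φ-values into `g(|t|)` for the odd nondecreasing function `g(t) = Φ(t + c) - Φ(c - t)`, and
`g(|t|) = |g(t)|`.
-/

open Set

lemma nullSingletonClass_gaussianReal (m : ℝ) {v : NNReal} (hv : v ≠ 0) :
    NullSingletonClass (gaussianReal m v) :=
  ⟨fun x => gaussianReal_absolutelyContinuous m hv (measure_singleton x)⟩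

section CDF

variable {μ : Measure ℝ} [IsProbabilityMeasure μ] [NullSingletonClass μ]

lemma cdf_neg_of_map_neg_eq (h : μ.map (fun x => -x) = μ) (x : ℝ) :
    cdf μ (-x) = 1 - cdf μ x := by
  have h_Iic : μ.real (Iic (-x)) = μ.real (Ici x) := by
    conv_lhs => rw [← h]
    rw [map_measureReal_apply measurable_neg measurableSet_Iic, neg_preimage, neg_Iic, neg_neg]
  rw [cdf_eq_real, cdf_eq_real, h_Iic, ← measureReal_congr Ioi_ae_eq_Ici, ← compl_Iic,
    probReal_compl_eq_one_sub measurableSet_Iic]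

lemma measure_lt_abs_sub (a : ℝ) {r : ℝ} (hr : 0 ≤ r) :
    μ {y | r < |y - a|} = ENNReal.ofReal (1 - (cdf μ (a + r) - cdf μ (a - r))) := by
  have h_compl : {y | r < |y - a|} = (Icc (a - r) (a + r))ᶜ := by
    ext y
    simp only [mem_ofPred_eq, mem_compl_iff, mem_Icc, lt_abs, not_and_or, not_le]
    constructor <;> rintro (h | h) <;> first | (left; linarith) | (right; linarith)
  have h_Icc : μ.real (Icc (a - r) (a + r)) = cdf μ (a + r) - cdf μ (a - r) := by
    rw [← measureReal_congr Ioc_ae_eq_Icc, ← Iic_sdiff_Iic,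
      measureReal_sdiff (Iic_subset_Iic.2 (by linarith)) measurableSet_Iic, cdf_eq_real, cdf_eq_real]
  rw [← ofReal_measureReal, h_compl, probReal_compl_eq_one_sub measurableSet_Icc, h_Icc]

end CDF

lemma Phi_neg (x : ℝ) : Phi (-x) = 1 - Phi x :=
  have := nullSingletonClass_gaussianReal 0 one_ne_zero
  cdf_neg_of_map_neg_eq (by rw [gaussianReal_map_neg, neg_zero]) x

lemma add_abs_sub_sub_abs_eq_abs {F : ℝ → ℝ} (hF : Monotone F) (hneg : ∀ x, F (-x) = 1 - F x)
    (a t : ℝ) : F (a + |t|) - F (a - |t|) = |F (t - a) - F (-a - t)| := by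
  have h_symm : F (a + |t|) - F (a - |t|) = F (|t| - a) - F (-a - |t|) := by
    rw [show a + |t| = -(-a - |t|) by ring, show a - |t| = -(|t| - a) by ring, hneg, hneg]
    ring
  rw [h_symm]
  rcases le_total 0 t with ht | ht
  · rw [abs_of_nonneg ht, abs_of_nonneg (sub_nonneg.2 (hF (by linarith)))]
  · rw [abs_of_nonpos ht, abs_of_nonpos (sub_nonpos.2 (hF (by linarith)))]
    ring_nf

theorem stmt_4_general {Ω : Type*} [MeasurableSpace Ω] (P : Measure Ω)
    (Z : Ω → ℝ) (hZ : P.map Z = gaussianReal 0 1) :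
    ∀ b z : ℝ,
      P {ω | |Z ω + b / 2| > |z + b / 2|} = ENNReal.ofReal (1 - |Phi (z + b) - Phi (-z)|) := by
  intro b z
  have := nullSingletonClass_gaussianReal 0 one_ne_zero
  have hZm : AEMeasurable Z P := aemeasurable_of_map_neZero (by rw [hZ]; infer_instance)
  have h_meas : MeasurableSet {y : ℝ | |z + b / 2| < |y - -(b / 2)|} :=
    measurableSet_lt measurable_const (by fun_prop)
  calc P {ω | |Z ω + b / 2| > |z + b / 2|}
      = gaussianReal 0 1 {y | |z + b / 2| < |y - -(b / 2)|} := by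
        rw [← hZ, Measure.map_apply_of_aemeasurable hZm h_meas]
        simp only [preimage_ofPred_eq, sub_neg_eq_add, gt_iff_lt]
    _ = ENNReal.ofReal (1 - (Phi (-(b / 2) + |z + b / 2|) - Phi (-(b / 2) - |z + b / 2|))) :=
        measure_lt_abs_sub _ (abs_nonneg _)
    _ = ENNReal.ofReal (1 - |Phi (z + b) - Phi (-z)|) := by
        rw [add_abs_sub_sub_abs_eq_abs (F := Phi) (monotone_cdf _) Phi_neg,
          show z + b / 2 - -(b / 2) = z + b by ring, show -(-(b / 2)) - (z + b / 2) = -z by ring]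

theorem stmt_4 {Ω : Type*} [MeasurableSpace Ω] (P : Measure Ω) [IsProbabilityMeasure P]
    (Z : Ω → ℝ) (hZ : P.map Z = gaussianReal 0 1) :
    ∀ b z : ℝ,
      P {ω | |Z ω + b / 2| > |z + b / 2|} = ENNReal.ofReal (1 - |Phi (z + b) - Phi (-z)|) :=
  stmt_4_general P Z hZ
end

section
/- For all z > 0 and b > 0, the FAB p-value is strictly smaller than the UMPU p-value: p(z,b) < p(z,0). Similarly, for all z < 0 and b < 0, p(z,b) < p(z,0). -/
open MeasureTheory ProbabilityTheory

/-- The FAB p-value function. -/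
noncomputable def fabP (z b : ℝ) : ℝ := 1 - |Phi (z + b) - Phi (-z)|

theorem ProbabilityTheory.strictMono_cdf_of_absolutelyContinuous (μ : Measure ℝ)
    [IsProbabilityMeasure μ] (hμ : volume ≪ μ) : StrictMono (cdf μ) := by
  intro x y hxy
  have hpos : 0 < μ (Set.Ioc x y) := by
    refine pos_iff_ne_zero.2 fun h0 => hxy.not_ge ?_
    simpa [Real.volume_Ioc] using hμ h0
  rwa [← measure_cdf μ, StieltjesFunction.measure_Ioc, ENNReal.ofReal_pos, sub_pos] at hpos

theorem Phi_strictMono : StrictMono Phi :=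
  strictMono_cdf_of_absolutelyContinuous _ (gaussianReal_absolutelyContinuous' 0 one_ne_zero)

theorem stmt_7 :
    (∀ z b : ℝ, 0 < z → 0 < b → fabP z b < fabP z 0) ∧
      (∀ z b : ℝ, z < 0 → b < 0 → fabP z b < fabP z 0) := by
  refine ⟨fun z b hz hb => ?_, fun z b hz hb => ?_⟩
  · have h₁ : Phi (-z) < Phi z := Phi_strictMono (neg_lt_self hz)
    have h₂ : Phi z < Phi (z + b) := Phi_strictMono (lt_add_of_pos_right z hb)
    rw [fabP, fabP, add_zero, abs_of_pos (sub_pos.2 h₁), abs_of_pos (sub_pos.2 (h₁.trans h₂))]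
    linarith
  · have h₁ : Phi z < Phi (-z) := Phi_strictMono (lt_neg_self_iff.2 hz)
    have h₂ : Phi (z + b) < Phi z := Phi_strictMono (add_lt_of_neg_right z hb)
    rw [fabP, fabP, add_zero, abs_of_neg (sub_neg.2 h₁), abs_of_neg (sub_neg.2 (h₂.trans h₁))]
    linarith
end
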